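/- For every nonnegative integer L, the sum over all integers j of (-1)^j q^{j(5j+1)/2} [2L choose L-2j]_q equals the sum over n = 0 to L of q^{n^2} [L choose n]_q. (Bressoud's bounded first Rogers–Ramanujan identity.) -/

import Mathlib

open Polynomial

noncomputable def qb : ℕ → ℕ → Polynomial ℤ
  | _, 0 => 1
  | 0, _ + 1 => 0
  | n + 1, m + 1 => qb n m + X ^ (m + 1) * qb n (m + 1)

noncomputable def qbz (n m : ℤ) : Polynomial ℤ :=
  if 0 ≤ m ∧ m ≤ n then qb n.toNat m.toNat else 0

/-- `B(L,M,a,b) = [L+M+a-b; L+a]_q [L+M-a+b; L-a]_q`. -/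
noncomputable def Bp (L M a b : ℤ) : Polynomial ℤ :=
  qbz (L + M + a - b) (L + a) * qbz (L + M - a + b) (L - a)

lemma qb_zero_right (n : ℕ) : qb n 0 = 1 := by cases n <;> rfl

lemma qb_eq_zero : ∀ {n m : ℕ}, n < m → qb n m = 0
  | 0, m + 1, _ => rfl
  | n + 1, m + 1, h => by
    rw [qb, qb_eq_zero (by omega), qb_eq_zero (by omega)]
    simp

lemma qb_self (n : ℕ) : qb n n = 1 := by
  induction n with
  | zero => rfl
  | succ n ih => rw [qb, ih, qb_eq_zero (by omega)]; simp

lemma pascal2 (n m : ℕ) : qb (n + 1) (m + 1) = qb n (m + 1) + X ^ (n - m) * qb n m := by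
  induction n generalizing m with
  | zero =>
    rcases m with _ | m
    · simp [qb_self, qb_eq_zero]
    · rw [qb_eq_zero (by omega), qb_eq_zero (by omega), qb_eq_zero (by omega)]; simp
  | succ n ih =>
    rcases lt_or_ge (n + 1) m with h | h
    · rw [qb_eq_zero (by omega), qb_eq_zero (by omega), qb_eq_zero (by omega)]; simp
    rcases eq_or_lt_of_le h with h | h
    · subst h
      rw [qb_self, qb_eq_zero (by omega), qb_self]; simp
    · have hm : m ≤ n := by omega
      rcases m with _ | m
      · have d1 : qb (n + 2) 1 = qb (n+1) 0 + X ^ 1 * qb (n+1) 1 := rfl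
        have d0 : qb (n + 1) 1 = qb n 0 + X ^ 1 * qb n 1 := rfl
        have i1 := ih 0
        rw [qb_zero_right] at d1 d0
        rw [Nat.sub_zero, qb_zero_right] at i1
        have e : n + 1 - 0 = n + 1 := rfl
        rw [e, qb_zero_right]
        simp only [Nat.zero_add] at i1
        linear_combination d1 + X * i1 - d0
      · obtain ⟨k, hk⟩ : ∃ k, n = k + (m + 1) := ⟨n - (m+1), by omega⟩
        subst hk
        have d1 : qb (k+m+1+2) (m+2) = qb (k+m+2) (m+1) + X ^ (m+2) * qb (k+m+2) (m+2) := rfl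
        have d2 : qb (k+m+2) (m+2) = qb (k+m+1) (m+1) + X ^ (m+2) * qb (k+m+1) (m+2) := rfl
        have d3 : qb (k+m+2) (m+1) = qb (k+m+1) m + X ^ (m+1) * qb (k+m+1) (m+1) := rfl
        have i1 := ih (m+1)
        have i2 := ih m
        have e1 : k + (m+1) - (m+1) = k := by omega
        have e2 : k + (m+1) - m = k + 1 := by omega
        have e3 : k + (m+1) + 1 - (m+1) = k + 1 := by omega
        rw [e1] at i1
        rw [e2] at i2
        rw [e3]
        have n1 : k + (m+1) + 1 = k + m + 2 := by omega
        have n2 : k + (m+1) = k + m + 1 := by omega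
        have n3 : k + (m+1) + 1 + 1 = k + m + 1 + 2 := by omega
        have n4 : m + 1 + 1 = m + 2 := rfl
        simp only [n3, n1, n2, n4] at i1 i2 ⊢
        linear_combination d1 + i2 - X ^ (k+1) * d3 - d2 + X ^ (m+2) * i1

lemma qb_symm : ∀ (n m : ℕ), m ≤ n → qb n m = qb n (n - m) := by
  intro n
  induction n with
  | zero => intro m h; interval_cases m; rfl
  | succ n ih =>
    intro m h
    rcases m with _ | m
    · rw [qb_zero_right, Nat.sub_zero, qb_self]
    rcases Nat.lt_or_ge m n with h2 | h2
    · have e : n + 1 - (m + 1) = (n - (m + 1)) + 1 := by omega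
      rw [e, pascal2 n (n - (m + 1))]
      have d : qb (n+1) (m+1) = qb n m + X ^ (m+1) * qb n (m+1) := rfl
      have e2 : n - (n - (m + 1)) = m + 1 := by omega
      have e3 : n - (m + 1) + 1 = n - m := by omega
      rw [d, e2, e3, ih m (by omega), ih (m+1) (by omega)]
    · have : m = n := by omega
      subst this
      rw [qb_self, Nat.sub_self, qb_zero_right]

lemma qbz_eq_qb (n m : ℕ) : qbz n m = qb n m := by
  unfold qbz
  split
  · simp
  · next h =>
    have : n < m := by omega
    rw [qb_eq_zero this]

lemma qbz_eq_zero {n m : ℤ} (h : m < 0 ∨ n < m) : qbz n m = 0 := by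
  unfold qbz; rw [if_neg (by omega)]

lemma qbz_zero_right (n : ℕ) : qbz n 0 = 1 := by
  have := qbz_eq_qb n 0
  simpa [qb_zero_right] using this

lemma pascal1z (N : ℕ) (m : ℤ) :
    qbz ((N : ℤ) + 1) m = qbz N (m - 1) + X ^ m.toNat * qbz N m := by
  rcases lt_trichotomy m 0 with h | h | h
  · rw [qbz_eq_zero (n := (N:ℤ)+1) (Or.inl h),
      show qbz (N:ℤ) (m-1) = 0 from qbz_eq_zero (Or.inl (by omega)),
      show qbz (N:ℤ) m = 0 from qbz_eq_zero (Or.inl h)]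
    ring
  · subst h
    have A : qbz ((N : ℤ) + 1) 0 = 1 := by
      rw [show ((N : ℤ) + 1) = ((N + 1 : ℕ) : ℤ) by push_cast; ring]
      exact qbz_zero_right (N + 1)
    rw [A, show qbz (N:ℤ) ((0:ℤ)-1) = 0 from qbz_eq_zero (Or.inl (by omega)),
      qbz_zero_right N]
    simp
  · obtain ⟨a, rfl⟩ : ∃ a : ℕ, m = (a : ℤ) + 1 := ⟨(m - 1).toNat, by omega⟩
    rw [show ((a : ℤ) + 1 - 1) = ((a : ℕ) : ℤ) by ring,
      show ((a : ℤ) + 1) = ((a + 1 : ℕ) : ℤ) by push_cast; ring,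
      show ((N : ℤ) + 1) = ((N + 1 : ℕ) : ℤ) by push_cast; ring,
      qbz_eq_qb, qbz_eq_qb, qbz_eq_qb,
      show ((a + 1 : ℕ) : ℤ).toNat = a + 1 by simp]
    rfl

lemma pascal2z (N : ℕ) (m : ℤ) :
    qbz ((N : ℤ) + 1) m = qbz N m + X ^ ((N : ℤ) + 1 - m).toNat * qbz N (m - 1) := by
  rcases lt_trichotomy m 0 with h | h | h
  · rw [qbz_eq_zero (n := (N:ℤ)+1) (Or.inl h),
      show qbz (N:ℤ) (m-1) = 0 from qbz_eq_zero (Or.inl (by omega)),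
      show qbz (N:ℤ) m = 0 from qbz_eq_zero (Or.inl h)]
    ring
  · subst h
    have A : qbz ((N : ℤ) + 1) 0 = 1 := by
      rw [show ((N : ℤ) + 1) = ((N + 1 : ℕ) : ℤ) by push_cast; ring]
      exact qbz_zero_right (N + 1)
    rw [A, show qbz (N:ℤ) ((0:ℤ)-1) = 0 from qbz_eq_zero (Or.inl (by omega)),
      qbz_zero_right N]
    ring
  · obtain ⟨a, rfl⟩ : ∃ a : ℕ, m = (a : ℤ) + 1 := ⟨(m - 1).toNat, by omega⟩
    rw [show ((N : ℤ) + 1 - ((a:ℤ) + 1)).toNat = N - a by omega,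
      show ((a : ℤ) + 1 - 1) = ((a : ℕ) : ℤ) by ring,
      show ((a : ℤ) + 1) = ((a + 1 : ℕ) : ℤ) by push_cast; ring,
      show ((N : ℤ) + 1) = ((N + 1 : ℕ) : ℤ) by push_cast; ring,
      qbz_eq_qb, qbz_eq_qb, qbz_eq_qb]
    exact pascal2 N a

lemma qbz_symm (N : ℕ) (m : ℤ) : qbz N m = qbz N ((N : ℤ) - m) := by
  rcases lt_or_ge m 0 with h | h
  · rw [qbz_eq_zero (Or.inl h), qbz_eq_zero (Or.inr (by omega))]
  rcases le_or_gt m N with h2 | h2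
  · obtain ⟨a, rfl⟩ : ∃ a : ℕ, m = (a : ℤ) := ⟨m.toNat, by omega⟩
    have c : ((N : ℤ) - a) = ((N - a : ℕ) : ℤ) := by
      have : a ≤ N := by exact_mod_cast h2
      push_cast [this]; ring
    rw [c, qbz_eq_qb, qbz_eq_qb]
    exact qb_symm N a (by exact_mod_cast h2)
  · rw [qbz_eq_zero (Or.inr h2), qbz_eq_zero (Or.inl (by omega))]

lemma Mz (N : ℕ) (m : ℤ) :
    (1 - X ^ ((N : ℤ) + 1 - m).toNat) * qbz ((N : ℤ) + 1) m
      = (1 - X ^ (N + 1)) * qbz N m := by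
  rcases lt_or_ge m 0 with h | h
  · rw [qbz_eq_zero (Or.inl h), qbz_eq_zero (Or.inl h)]; ring
  rcases lt_or_ge ((N : ℤ) + 1) m with h2 | h2
  · rw [qbz_eq_zero (Or.inr h2), qbz_eq_zero (Or.inr (by omega))]; ring
  · have p1 := pascal1z N m
    have p2 := pascal2z N m
    have he : (X : Polynomial ℤ) ^ (N + 1)
        = X ^ (((N : ℤ) + 1 - m).toNat + m.toNat) := by
      congr 1; omega
    rw [he]
    linear_combination p2 - X ^ ((N : ℤ) + 1 - m).toNat * p1

noncomputable def eps (j : ℤ) : Polynomial ℤ := (-1) ^ j.natAbs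

lemma eps_even {j : ℤ} (h : Even j) : eps j = 1 := by
  unfold eps
  rw [Even.neg_one_pow]
  rwa [Int.natAbs_even]

lemma eps_odd {j : ℤ} (h : Odd j) : eps j = -1 := by
  unfold eps
  rw [Odd.neg_one_pow]
  rwa [Int.natAbs_odd]

lemma eps_succ (j : ℤ) : eps (j + 1) = - eps j := by
  rcases Int.even_or_odd j with h | h
  · rw [eps_even h, eps_odd (by rcases h with ⟨k, hk⟩; exact ⟨k, by omega⟩)]
  · rw [eps_odd h, eps_even (by rcases h with ⟨k, hk⟩; exact ⟨k + 1, by omega⟩)]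
    ring

lemma eps_neg (j : ℤ) : eps (-j) = eps j := by
  unfold eps; rw [Int.natAbs_neg]

lemma eps_neg_one_sub (j : ℤ) : eps (-1 - j) = - eps j := by
  rw [show -1 - j = -(j + 1) by ring, eps_neg, eps_succ]

lemma eps_one_sub (j : ℤ) : eps (1 - j) = - eps j := by
  rw [show 1 - j = -(j - 1) by ring, eps_neg]
  have h := eps_succ (j - 1)
  rw [show j - 1 + 1 = j by ring] at h
  rw [h, neg_neg]

lemma supp_fin {f : ℤ → Polynomial ℤ} (a b : ℤ) (h : ∀ j, f j ≠ 0 → a ≤ j ∧ j ≤ b) :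
    (Function.support f).Finite :=
  Set.Finite.subset (Set.finite_Icc a b) fun j hj => Set.mem_Icc.2 (h j hj)

lemma finsum_reindex_neg (f : ℤ → Polynomial ℤ) : ∑ᶠ j : ℤ, f (-j) = ∑ᶠ j : ℤ, f j :=
  finsum_comp_equiv (Equiv.neg ℤ)

lemma finsum_reindex_sub (c : ℤ) (f : ℤ → Polynomial ℤ) :
    ∑ᶠ j : ℤ, f (c - j) = ∑ᶠ j : ℤ, f j :=
  finsum_comp_equiv (Equiv.subLeft c)

lemma finsum_reindex_add (c : ℤ) (f : ℤ → Polynomial ℤ) :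
    ∑ᶠ j : ℤ, f (j + c) = ∑ᶠ j : ℤ, f j :=
  finsum_comp_equiv (Equiv.addRight c)

lemma finsum_zero_antisym (f : ℤ → Polynomial ℤ) (c : ℤ) (h : ∀ j, f (c - j) = - f j) :
    ∑ᶠ j : ℤ, f j = 0 := by
  have h1 : ∑ᶠ j : ℤ, f (c - j) = ∑ᶠ j : ℤ, f j := finsum_reindex_sub c f
  have h2 : ∑ᶠ j : ℤ, f (c - j) = ∑ᶠ j : ℤ, - f j := finsum_congr h
  rw [finsum_neg_distrib] at h2
  have h3 := h1.symm.trans h2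
  exact add_self_eq_zero.mp (eq_neg_iff_add_eq_zero.mp h3)

lemma qbz_ne_zero_bounds {n m : ℤ} (h : qbz n m ≠ 0) : 0 ≤ m ∧ m ≤ n := by
  by_contra hc
  exact h (qbz_eq_zero (by omega))

def Tq (j : ℤ) : ℤ := j * (3 * j + 1) / 2

lemma Tdvd (j : ℤ) : 2 ∣ j * (3 * j + 1) := by
  obtain ⟨k, hk⟩ := Int.even_mul_succ_self j
  exact ⟨j * j + k, by linear_combination hk⟩

lemma Tspec (j : ℤ) : 2 * Tq j = 3 * j ^ 2 + j := by
  unfold Tq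
  rw [Int.mul_ediv_cancel' (Tdvd j)]
  ring

lemma Edvd (j : ℤ) : 2 ∣ j * (5 * j + 1) := by
  obtain ⟨k, hk⟩ := Int.even_mul_succ_self j
  exact ⟨2 * (j * j) + k, by linear_combination hk⟩

lemma Espec (j : ℤ) : 2 * (j * (5 * j + 1) / 2) = 5 * j ^ 2 + j := by
  rw [Int.mul_ediv_cancel' (Edvd j)]
  ring

lemma sqf (j : ℤ) : 0 ≤ j ^ 2 ∧ 0 ≤ j ^ 2 - 2 * j + 1 ∧ 0 ≤ j ^ 2 + 2 * j + 1 :=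
  ⟨sq_nonneg j, by nlinarith [sq_nonneg (j - 1)], by nlinarith [sq_nonneg (j + 1)]⟩

lemma sqf2 (j : ℤ) : 0 ≤ j ^ 2 - 3 * j + 2 ∧ 0 ≤ j ^ 2 + 3 * j + 2 := by
  constructor
  · rcases le_or_gt j 1 with h | h
    · nlinarith [mul_nonneg (show (0:ℤ) ≤ 1 - j by omega) (show (0:ℤ) ≤ 2 - j by omega)]
    · nlinarith [mul_nonneg (show (0:ℤ) ≤ j - 1 by omega) (show (0:ℤ) ≤ j - 2 by omega)]
  · rcases le_or_gt j (-2) with h | h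
    · nlinarith [mul_nonneg (show (0:ℤ) ≤ -1 - j by omega) (show (0:ℤ) ≤ -2 - j by omega)]
    · nlinarith [mul_nonneg (show (0:ℤ) ≤ j + 1 by omega) (show (0:ℤ) ≤ j + 2 by omega)]

lemma supp_add_fin {f g : ℤ → Polynomial ℤ} (hf : (Function.support f).Finite)
    (hg : (Function.support g).Finite) : (Function.support fun j => f j + g j).Finite :=
  (hf.union hg).subset fun j hj => by
    rcases eq_or_ne (f j) 0 with h0 | h0
    · right
      have : f j + g j ≠ 0 := hj
      rw [h0, zero_add] at this
      exact this
    · left; exact h0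

lemma finsum_add4 (f1 f2 f3 f4 : ℤ → Polynomial ℤ)
    (h1 : (Function.support f1).Finite) (h2 : (Function.support f2).Finite)
    (h3 : (Function.support f3).Finite) (h4 : (Function.support f4).Finite) :
    ∑ᶠ j : ℤ, (f1 j + f2 j + f3 j + f4 j)
      = (∑ᶠ j : ℤ, f1 j) + (∑ᶠ j : ℤ, f2 j) + (∑ᶠ j : ℤ, f3 j) + (∑ᶠ j : ℤ, f4 j) := by
  rw [finsum_add_distrib (supp_add_fin (supp_add_fin h1 h2) h3) h4,
    finsum_add_distrib (supp_add_fin h1 h2) h3, finsum_add_distrib h1 h2]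

lemma hfin_gen (L : ℕ) (c : ℤ → Polynomial ℤ) (A B : ℤ) :
    (Function.support fun j : ℤ => c j * (qbz (L : ℤ) (A - j) * qbz (L : ℤ) (B + j))).Finite := by
  apply supp_fin (A - (L : ℤ)) A
  intro j hj
  have h1 : qbz (L : ℤ) (A - j) ≠ 0 := by
    intro h; apply hj; simp [h]
  have := qbz_ne_zero_bounds h1
  omega

set_option maxHeartbeats 1000000 in
lemma KK (L : ℕ) :
    (∀ n : ℤ, ∑ᶠ j : ℤ, eps j * X ^ (Tq j).toNat *
        (qbz (L : ℤ) (n - j) * qbz (L : ℤ) (n + j)) = qbz (L : ℤ) n)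
    ∧ (∀ m : ℤ, ∑ᶠ j : ℤ, eps j * X ^ (Tq j).toNat *
        (qbz (L : ℤ) (m - j) * qbz (L : ℤ) (m + 1 + j))
        = (1 - X ^ ((L : ℤ) - m).toNat) * qbz (L : ℤ) m) := by
  induction L with
  | zero =>
    simp only [Nat.cast_zero]
    constructor
    · intro n
      rcases eq_or_ne n 0 with rfl | hn
      · rw [finsum_eq_single _ 0]
        · have q00 : qbz (0 : ℤ) 0 = 1 := by simpa using qbz_zero_right 0
          norm_num [eps, Tq, q00]
        · intro x hx
          rcases lt_or_gt_of_ne hx with h | h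
          · rw [show qbz (0:ℤ) (0 - x) = 0 from qbz_eq_zero (Or.inr (by omega))]
            ring
          · rw [show qbz (0:ℤ) (0 + x) = 0 from qbz_eq_zero (Or.inr (by omega))]
            ring
      · rw [finsum_eq_zero_of_forall_eq_zero, qbz_eq_zero (show n < 0 ∨ (0:ℤ) < n by omega)]
        intro j
        rcases eq_or_ne (qbz (0:ℤ) (n - j)) 0 with h | h
        · rw [h]; ring
        rcases eq_or_ne (qbz (0:ℤ) (n + j)) 0 with h2 | h2
        · rw [h2]; ring
        have b1 := qbz_ne_zero_bounds h
        have b2 := qbz_ne_zero_bounds h2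
        exfalso; omega
    · intro m
      rw [finsum_eq_zero_of_forall_eq_zero]
      · rcases eq_or_ne m 0 with rfl | hm
        · norm_num
        · rw [qbz_eq_zero (show m < 0 ∨ (0:ℤ) < m by omega)]; ring
      · intro j
        rcases eq_or_ne (qbz (0:ℤ) (m - j)) 0 with h | h
        · rw [h]; ring
        rcases eq_or_ne (qbz (0:ℤ) (m + 1 + j)) 0 with h2 | h2
        · rw [h2]; ring
        have b1 := qbz_ne_zero_bounds h
        have b2 := qbz_ne_zero_bounds h2
        exfalso; omega
  | succ L ih =>
    obtain ⟨hK, hK2⟩ := ih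
    push_cast
    have stepK : ∀ n : ℤ, ∑ᶠ j : ℤ, eps j * X ^ (Tq j).toNat *
        (qbz ((L : ℤ) + 1) (n - j) * qbz ((L : ℤ) + 1) (n + j)) = qbz ((L : ℤ) + 1) n := by
      intro n
      have dec : ∀ j : ℤ, eps j * X ^ (Tq j).toNat *
          (qbz ((L : ℤ) + 1) (n - j) * qbz ((L : ℤ) + 1) (n + j))
          = eps j * X ^ (Tq j).toNat * (qbz (L:ℤ) (n - 1 - j) * qbz (L:ℤ) (n + j))
            + (eps j * X ^ (Tq j).toNat * X ^ (((L:ℤ) + 1 - (n + j)).toNat)) *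
              (qbz (L:ℤ) (n - 1 - j) * qbz (L:ℤ) (n - 1 + j))
            + (eps j * X ^ (Tq j).toNat * X ^ ((n - j).toNat)) *
              (qbz (L:ℤ) (n - j) * qbz (L:ℤ) (n + j))
            + (eps j * X ^ (Tq j).toNat * X ^ ((n - j).toNat) * X ^ (((L:ℤ) + 1 - (n + j)).toNat)) *
              (qbz (L:ℤ) (n - j) * qbz (L:ℤ) (n - 1 + j)) := by
        intro j
        rw [pascal1z L (n - j), pascal2z L (n + j), show n - j - 1 = n - 1 - j by ring,
          show n + j - 1 = n - 1 + j by ring]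
        ring
      have E1 : ∑ᶠ j : ℤ, eps j * X ^ (Tq j).toNat * (qbz (L:ℤ) (n - 1 - j) * qbz (L:ℤ) (n + j))
          = (1 - X ^ ((L:ℤ) - (n - 1)).toNat) * qbz (L:ℤ) (n - 1) := by
        rw [← hK2 (n - 1)]
        apply finsum_congr
        intro j
        rw [show n - 1 + 1 + j = n + j by ring]
      have E2 : ∑ᶠ j : ℤ, (eps j * X ^ (Tq j).toNat * X ^ (((L:ℤ) + 1 - (n + j)).toNat)) *
            (qbz (L:ℤ) (n - 1 - j) * qbz (L:ℤ) (n - 1 + j))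
          = X ^ ((L:ℤ) + 1 - n).toNat * qbz (L:ℤ) (n - 1) := by
        have tw : ∀ j : ℤ, (eps (-j) * X ^ (Tq (-j)).toNat * X ^ (((L:ℤ) + 1 - (n + -j)).toNat)) *
              (qbz (L:ℤ) (n - 1 - -j) * qbz (L:ℤ) (n - 1 + -j))
            = X ^ ((L:ℤ) + 1 - n).toNat *
              (eps j * X ^ (Tq j).toNat * (qbz (L:ℤ) (n - 1 - j) * qbz (L:ℤ) (n - 1 + j))) := by
          intro j
          rw [show n - 1 - -j = n - 1 + j by ring, show n - 1 + -j = n - 1 - j by ring,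
            show (L:ℤ) + 1 - (n + -j) = (L:ℤ) + 1 - n + j by ring]
          rcases eq_or_ne (qbz (L:ℤ) (n - 1 - j)) 0 with h | h
          · simp [h]
          rcases eq_or_ne (qbz (L:ℤ) (n - 1 + j)) 0 with h2 | h2
          · simp [h2]
          have b1 := qbz_ne_zero_bounds h
          have b2 := qbz_ne_zero_bounds h2
          have t1 := Tspec j
          have t2 := Tspec (-j)
          have hr : (-j)^2 = j^2 := by ring
          have hs := sqf j
          have hs2 := sqf2 j
          have e : (Tq (-j)).toNat + ((L:ℤ) + 1 - n + j).toNat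
              = ((L:ℤ) + 1 - n).toNat + (Tq j).toNat := by omega
          rw [eps_neg]
          calc (eps j * X ^ (Tq (-j)).toNat * X ^ (((L:ℤ) + 1 - n + j).toNat)) *
                (qbz (L:ℤ) (n - 1 + j) * qbz (L:ℤ) (n - 1 - j))
              = eps j * X ^ ((Tq (-j)).toNat + ((L:ℤ) + 1 - n + j).toNat) *
                (qbz (L:ℤ) (n - 1 - j) * qbz (L:ℤ) (n - 1 + j)) := by ring
            _ = X ^ ((L:ℤ) + 1 - n).toNat *
                (eps j * X ^ (Tq j).toNat * (qbz (L:ℤ) (n - 1 - j) * qbz (L:ℤ) (n - 1 + j))) := by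
                rw [e]; ring
        have h1 : ∑ᶠ j : ℤ, (eps (-j) * X ^ (Tq (-j)).toNat * X ^ (((L:ℤ) + 1 - (n + -j)).toNat)) *
              (qbz (L:ℤ) (n - 1 - -j) * qbz (L:ℤ) (n - 1 + -j))
            = ∑ᶠ j : ℤ, (eps j * X ^ (Tq j).toNat * X ^ (((L:ℤ) + 1 - (n + j)).toNat)) *
              (qbz (L:ℤ) (n - 1 - j) * qbz (L:ℤ) (n - 1 + j)) :=
          finsum_reindex_neg (fun j => (eps j * X ^ (Tq j).toNat *
            X ^ (((L:ℤ) + 1 - (n + j)).toNat)) *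
            (qbz (L:ℤ) (n - 1 - j) * qbz (L:ℤ) (n - 1 + j)))
        rw [← h1, finsum_congr tw,
          ← mul_finsum _ _,
          hK (n - 1)]
      have E3 : ∑ᶠ j : ℤ, (eps j * X ^ (Tq j).toNat * X ^ ((n - j).toNat)) *
            (qbz (L:ℤ) (n - j) * qbz (L:ℤ) (n + j))
          = X ^ n.toNat * qbz (L:ℤ) n := by
        have tw : ∀ j : ℤ, (eps (-j) * X ^ (Tq (-j)).toNat * X ^ ((n - -j).toNat)) *
              (qbz (L:ℤ) (n - -j) * qbz (L:ℤ) (n + -j))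
            = X ^ n.toNat *
              (eps j * X ^ (Tq j).toNat * (qbz (L:ℤ) (n - j) * qbz (L:ℤ) (n + j))) := by
          intro j
          rw [show n - -j = n + j by ring, show n + -j = n - j by ring]
          rcases eq_or_ne (qbz (L:ℤ) (n - j)) 0 with h | h
          · simp [h]
          rcases eq_or_ne (qbz (L:ℤ) (n + j)) 0 with h2 | h2
          · simp [h2]
          have b1 := qbz_ne_zero_bounds h
          have b2 := qbz_ne_zero_bounds h2
          have t1 := Tspec j
          have t2 := Tspec (-j)
          have hr : (-j)^2 = j^2 := by ring
          have hs := sqf j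
          have hs2 := sqf2 j
          have e : (Tq (-j)).toNat + (n + j).toNat = n.toNat + (Tq j).toNat := by omega
          rw [eps_neg]
          calc (eps j * X ^ (Tq (-j)).toNat * X ^ ((n + j).toNat)) *
                (qbz (L:ℤ) (n + j) * qbz (L:ℤ) (n - j))
              = eps j * X ^ ((Tq (-j)).toNat + (n + j).toNat) *
                (qbz (L:ℤ) (n - j) * qbz (L:ℤ) (n + j)) := by ring
            _ = X ^ n.toNat *
                (eps j * X ^ (Tq j).toNat * (qbz (L:ℤ) (n - j) * qbz (L:ℤ) (n + j))) := by
                rw [e]; ring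
        have h1 : ∑ᶠ j : ℤ, (eps (-j) * X ^ (Tq (-j)).toNat * X ^ ((n - -j).toNat)) *
              (qbz (L:ℤ) (n - -j) * qbz (L:ℤ) (n + -j))
            = ∑ᶠ j : ℤ, (eps j * X ^ (Tq j).toNat * X ^ ((n - j).toNat)) *
              (qbz (L:ℤ) (n - j) * qbz (L:ℤ) (n + j)) :=
          finsum_reindex_neg (fun j => (eps j * X ^ (Tq j).toNat * X ^ ((n - j).toNat)) *
            (qbz (L:ℤ) (n - j) * qbz (L:ℤ) (n + j)))
        rw [← h1, finsum_congr tw,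
          ← mul_finsum _ _,
          hK n]
      have E4 : ∑ᶠ j : ℤ, (eps j * X ^ (Tq j).toNat * X ^ ((n - j).toNat) *
            X ^ (((L:ℤ) + 1 - (n + j)).toNat)) *
            (qbz (L:ℤ) (n - j) * qbz (L:ℤ) (n - 1 + j)) = 0 := by
        apply finsum_zero_antisym _ 1
        intro j
        rw [show n - (1 - j) = n - 1 + j by ring, show n - 1 + (1 - j) = n - j by ring,
          show (L:ℤ) + 1 - (n + (1 - j)) = (L:ℤ) - n + j by ring]
        rcases eq_or_ne (qbz (L:ℤ) (n - j)) 0 with h | h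
        · simp [h]
        rcases eq_or_ne (qbz (L:ℤ) (n - 1 + j)) 0 with h2 | h2
        · simp [h2]
        have b1 := qbz_ne_zero_bounds h
        have b2 := qbz_ne_zero_bounds h2
        have t1 := Tspec j
        have t2 := Tspec (1 - j)
        have hr : (1 - j)^2 = j^2 - 2*j + 1 := by ring
        have hs := sqf j
        have hs2 := sqf2 j
        have e : (Tq (1 - j)).toNat + ((n - 1 + j).toNat + ((L:ℤ) - n + j).toNat)
            = (Tq j).toNat + ((n - j).toNat + ((L:ℤ) + 1 - (n + j)).toNat) := by omega
        rw [eps_one_sub]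
        calc (-eps j * X ^ (Tq (1 - j)).toNat * X ^ ((n - 1 + j).toNat) *
              X ^ (((L:ℤ) - n + j).toNat)) * (qbz (L:ℤ) (n - 1 + j) * qbz (L:ℤ) (n - j))
            = -(eps j * X ^ ((Tq (1 - j)).toNat + ((n - 1 + j).toNat + ((L:ℤ) - n + j).toNat)) *
              (qbz (L:ℤ) (n - j) * qbz (L:ℤ) (n - 1 + j))) := by ring
          _ = -((eps j * X ^ (Tq j).toNat * X ^ ((n - j).toNat) *
              X ^ (((L:ℤ) + 1 - (n + j)).toNat)) *
              (qbz (L:ℤ) (n - j) * qbz (L:ℤ) (n - 1 + j))) := by rw [e]; ring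
      calc ∑ᶠ j : ℤ, eps j * X ^ (Tq j).toNat *
            (qbz ((L : ℤ) + 1) (n - j) * qbz ((L : ℤ) + 1) (n + j))
          = ∑ᶠ j : ℤ, (eps j * X ^ (Tq j).toNat * (qbz (L:ℤ) (n - 1 - j) * qbz (L:ℤ) (n + j))
            + (eps j * X ^ (Tq j).toNat * X ^ (((L:ℤ) + 1 - (n + j)).toNat)) *
              (qbz (L:ℤ) (n - 1 - j) * qbz (L:ℤ) (n - 1 + j))
            + (eps j * X ^ (Tq j).toNat * X ^ ((n - j).toNat)) *
              (qbz (L:ℤ) (n - j) * qbz (L:ℤ) (n + j))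
            + (eps j * X ^ (Tq j).toNat * X ^ ((n - j).toNat) * X ^ (((L:ℤ) + 1 - (n + j)).toNat)) *
              (qbz (L:ℤ) (n - j) * qbz (L:ℤ) (n - 1 + j))) := finsum_congr dec
        _ = (∑ᶠ j : ℤ, eps j * X ^ (Tq j).toNat * (qbz (L:ℤ) (n - 1 - j) * qbz (L:ℤ) (n + j)))
            + (∑ᶠ j : ℤ, (eps j * X ^ (Tq j).toNat * X ^ (((L:ℤ) + 1 - (n + j)).toNat)) *
              (qbz (L:ℤ) (n - 1 - j) * qbz (L:ℤ) (n - 1 + j)))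
            + (∑ᶠ j : ℤ, (eps j * X ^ (Tq j).toNat * X ^ ((n - j).toNat)) *
              (qbz (L:ℤ) (n - j) * qbz (L:ℤ) (n + j)))
            + (∑ᶠ j : ℤ, (eps j * X ^ (Tq j).toNat * X ^ ((n - j).toNat) *
              X ^ (((L:ℤ) + 1 - (n + j)).toNat)) *
              (qbz (L:ℤ) (n - j) * qbz (L:ℤ) (n - 1 + j))) :=
            finsum_add4 _ _ _ _
              (hfin_gen L _ (n - 1) n) (hfin_gen L _ (n - 1) (n - 1))
              (hfin_gen L _ n n) (hfin_gen L _ n (n - 1))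
        _ = (1 - X ^ ((L:ℤ) - (n - 1)).toNat) * qbz (L:ℤ) (n - 1)
            + X ^ ((L:ℤ) + 1 - n).toNat * qbz (L:ℤ) (n - 1)
            + X ^ n.toNat * qbz (L:ℤ) n + 0 := by rw [E1, E2, E3, E4]
        _ = qbz ((L : ℤ) + 1) n := by
            rw [pascal1z L n, show (L:ℤ) - (n - 1) = (L:ℤ) + 1 - n by ring]
            ring
    refine ⟨stepK, ?_⟩
    intro m
    have dec : ∀ j : ℤ, eps j * X ^ (Tq j).toNat *
        (qbz ((L : ℤ) + 1) (m - j) * qbz ((L : ℤ) + 1) (m + 1 + j))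
        = eps j * X ^ (Tq j).toNat * (qbz (L:ℤ) (m - j) * qbz (L:ℤ) (m + j))
          + (eps j * X ^ (Tq j).toNat * X ^ ((m + 1 + j).toNat)) *
            (qbz (L:ℤ) (m - j) * qbz (L:ℤ) (m + 1 + j))
          + (eps j * X ^ (Tq j).toNat * X ^ (((L:ℤ) + 1 - (m - j)).toNat)) *
            (qbz (L:ℤ) (m - 1 - j) * qbz (L:ℤ) (m + j))
          + (eps j * X ^ (Tq j).toNat * X ^ (((L:ℤ) + 1 - (m - j)).toNat) *
            X ^ ((m + 1 + j).toNat)) *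
            (qbz (L:ℤ) (m - 1 - j) * qbz (L:ℤ) (m + 1 + j)) := by
      intro j
      rw [pascal2z L (m - j), pascal1z L (m + 1 + j), show m + 1 + j - 1 = m + j by ring,
        show m - j - 1 = m - 1 - j by ring]
      ring
    have E2 : ∑ᶠ j : ℤ, (eps j * X ^ (Tq j).toNat * X ^ ((m + 1 + j).toNat)) *
          (qbz (L:ℤ) (m - j) * qbz (L:ℤ) (m + 1 + j)) = 0 := by
      apply finsum_zero_antisym _ (-1)
      intro j
      rw [show m - (-1 - j) = m + 1 + j by ring, show m + 1 + (-1 - j) = m - j by ring]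
      rcases eq_or_ne (qbz (L:ℤ) (m - j)) 0 with h | h
      · simp [h]
      rcases eq_or_ne (qbz (L:ℤ) (m + 1 + j)) 0 with h2 | h2
      · simp [h2]
      have b1 := qbz_ne_zero_bounds h
      have b2 := qbz_ne_zero_bounds h2
      have t1 := Tspec j
      have t2 := Tspec (-1 - j)
      have hr : (-1 - j)^2 = j^2 + 2*j + 1 := by ring
      have hs := sqf j
      have hs2 := sqf2 j
      have e : (Tq (-1 - j)).toNat + (m - j).toNat = (Tq j).toNat + (m + 1 + j).toNat := by omega
      rw [eps_neg_one_sub]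
      calc (-eps j * X ^ (Tq (-1 - j)).toNat * X ^ ((m - j).toNat)) *
            (qbz (L:ℤ) (m + 1 + j) * qbz (L:ℤ) (m - j))
          = -(eps j * X ^ ((Tq (-1 - j)).toNat + (m - j).toNat) *
            (qbz (L:ℤ) (m - j) * qbz (L:ℤ) (m + 1 + j))) := by ring
        _ = -((eps j * X ^ (Tq j).toNat * X ^ ((m + 1 + j).toNat)) *
            (qbz (L:ℤ) (m - j) * qbz (L:ℤ) (m + 1 + j))) := by rw [e]; ring
    have E3 : ∑ᶠ j : ℤ, (eps j * X ^ (Tq j).toNat * X ^ (((L:ℤ) + 1 - (m - j)).toNat)) *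
          (qbz (L:ℤ) (m - 1 - j) * qbz (L:ℤ) (m + j)) = 0 := by
      apply finsum_zero_antisym _ (-1)
      intro j
      rw [show m - 1 - (-1 - j) = m + j by ring, show m + (-1 - j) = m - 1 - j by ring,
        show (L:ℤ) + 1 - (m - (-1 - j)) = (L:ℤ) - m - j by ring]
      rcases eq_or_ne (qbz (L:ℤ) (m - 1 - j)) 0 with h | h
      · simp [h]
      rcases eq_or_ne (qbz (L:ℤ) (m + j)) 0 with h2 | h2
      · simp [h2]
      have b1 := qbz_ne_zero_bounds h
      have b2 := qbz_ne_zero_bounds h2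
      have t1 := Tspec j
      have t2 := Tspec (-1 - j)
      have hr : (-1 - j)^2 = j^2 + 2*j + 1 := by ring
      have hs := sqf j
      have hs2 := sqf2 j
      have e : (Tq (-1 - j)).toNat + ((L:ℤ) - m - j).toNat
          = (Tq j).toNat + ((L:ℤ) + 1 - (m - j)).toNat := by omega
      rw [eps_neg_one_sub]
      calc (-eps j * X ^ (Tq (-1 - j)).toNat * X ^ (((L:ℤ) - m - j).toNat)) *
            (qbz (L:ℤ) (m + j) * qbz (L:ℤ) (m - 1 - j))
          = -(eps j * X ^ ((Tq (-1 - j)).toNat + ((L:ℤ) - m - j).toNat) *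
            (qbz (L:ℤ) (m - 1 - j) * qbz (L:ℤ) (m + j))) := by ring
        _ = -((eps j * X ^ (Tq j).toNat * X ^ (((L:ℤ) + 1 - (m - j)).toNat)) *
            (qbz (L:ℤ) (m - 1 - j) * qbz (L:ℤ) (m + j))) := by rw [e]; ring
    have E4 : ∑ᶠ j : ℤ, (eps j * X ^ (Tq j).toNat * X ^ (((L:ℤ) + 1 - (m - j)).toNat) *
          X ^ ((m + 1 + j).toNat)) *
          (qbz (L:ℤ) (m - 1 - j) * qbz (L:ℤ) (m + 1 + j))
        = -(X ^ (L + 1)) * qbz (L:ℤ) m := by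
      have tw : ∀ j : ℤ, (eps (j + -1) * X ^ (Tq (j + -1)).toNat *
            X ^ (((L:ℤ) + 1 - (m - (j + -1))).toNat) * X ^ ((m + 1 + (j + -1)).toNat)) *
            (qbz (L:ℤ) (m - 1 - (j + -1)) * qbz (L:ℤ) (m + 1 + (j + -1)))
          = -(X ^ (L + 1)) *
            (eps (-j) * X ^ (Tq (-j)).toNat * (qbz (L:ℤ) (m - -j) * qbz (L:ℤ) (m + -j))) := by
        intro j
        rw [show m - 1 - (j + -1) = m - j by ring, show m + 1 + (j + -1) = m + j by ring,
          show (L:ℤ) + 1 - (m - (j + -1)) = (L:ℤ) - m + j by ring,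
          show m - -j = m + j by ring, show m + -j = m - j by ring]
        rcases eq_or_ne (qbz (L:ℤ) (m - j)) 0 with h | h
        · simp [h]
        rcases eq_or_ne (qbz (L:ℤ) (m + j)) 0 with h2 | h2
        · simp [h2]
        have b1 := qbz_ne_zero_bounds h
        have b2 := qbz_ne_zero_bounds h2
        have t1 := Tspec (j + -1)
        have t2 := Tspec (-j)
        have hr1 : (j + -1)^2 = j^2 - 2*j + 1 := by ring
        have hr2 : (-j)^2 = j^2 := by ring
        have hs := sqf j
        have hs2 := sqf2 j
        have he : eps (j + -1) = -eps (-j) := by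
          rw [show j + -1 = -(1 - j) by ring, eps_neg, eps_one_sub, eps_neg]
        have e : (Tq (j + -1)).toNat + (((L:ℤ) - m + j).toNat + (m + j).toNat)
            = (L + 1) + (Tq (-j)).toNat := by omega
        rw [he]
        calc (-eps (-j) * X ^ (Tq (j + -1)).toNat * X ^ (((L:ℤ) - m + j).toNat) *
              X ^ ((m + j).toNat)) * (qbz (L:ℤ) (m - j) * qbz (L:ℤ) (m + j))
            = -(eps (-j) * X ^ ((Tq (j + -1)).toNat + (((L:ℤ) - m + j).toNat + (m + j).toNat)) *
              (qbz (L:ℤ) (m + j) * qbz (L:ℤ) (m - j))) := by ring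
          _ = -(X ^ (L + 1)) *
              (eps (-j) * X ^ (Tq (-j)).toNat * (qbz (L:ℤ) (m + j) * qbz (L:ℤ) (m - j))) := by
              rw [e]; ring
      have h1 : ∑ᶠ j : ℤ, (eps (j + -1) * X ^ (Tq (j + -1)).toNat *
            X ^ (((L:ℤ) + 1 - (m - (j + -1))).toNat) * X ^ ((m + 1 + (j + -1)).toNat)) *
            (qbz (L:ℤ) (m - 1 - (j + -1)) * qbz (L:ℤ) (m + 1 + (j + -1)))
          = ∑ᶠ j : ℤ, (eps j * X ^ (Tq j).toNat * X ^ (((L:ℤ) + 1 - (m - j)).toNat) *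
            X ^ ((m + 1 + j).toNat)) *
            (qbz (L:ℤ) (m - 1 - j) * qbz (L:ℤ) (m + 1 + j)) :=
        finsum_reindex_add (-1) (fun j => (eps j * X ^ (Tq j).toNat *
          X ^ (((L:ℤ) + 1 - (m - j)).toNat) * X ^ ((m + 1 + j).toNat)) *
          (qbz (L:ℤ) (m - 1 - j) * qbz (L:ℤ) (m + 1 + j)))
      have h2 : ∑ᶠ j : ℤ, -(X ^ (L + 1)) *
            (eps (-j) * X ^ (Tq (-j)).toNat * (qbz (L:ℤ) (m - -j) * qbz (L:ℤ) (m + -j)))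
          = ∑ᶠ j : ℤ, -(X ^ (L + 1)) *
            (eps j * X ^ (Tq j).toNat * (qbz (L:ℤ) (m - j) * qbz (L:ℤ) (m + j))) :=
        finsum_reindex_neg (fun j => -(X ^ (L + 1)) *
          (eps j * X ^ (Tq j).toNat * (qbz (L:ℤ) (m - j) * qbz (L:ℤ) (m + j))))
      rw [← h1, finsum_congr tw, h2,
        ← mul_finsum _ _,
        hK m]
    calc ∑ᶠ j : ℤ, eps j * X ^ (Tq j).toNat *
          (qbz ((L : ℤ) + 1) (m - j) * qbz ((L : ℤ) + 1) (m + 1 + j))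
        = ∑ᶠ j : ℤ, (eps j * X ^ (Tq j).toNat * (qbz (L:ℤ) (m - j) * qbz (L:ℤ) (m + j))
          + (eps j * X ^ (Tq j).toNat * X ^ ((m + 1 + j).toNat)) *
            (qbz (L:ℤ) (m - j) * qbz (L:ℤ) (m + 1 + j))
          + (eps j * X ^ (Tq j).toNat * X ^ (((L:ℤ) + 1 - (m - j)).toNat)) *
            (qbz (L:ℤ) (m - 1 - j) * qbz (L:ℤ) (m + j))
          + (eps j * X ^ (Tq j).toNat * X ^ (((L:ℤ) + 1 - (m - j)).toNat) *
            X ^ ((m + 1 + j).toNat)) *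
            (qbz (L:ℤ) (m - 1 - j) * qbz (L:ℤ) (m + 1 + j))) := finsum_congr dec
      _ = (∑ᶠ j : ℤ, eps j * X ^ (Tq j).toNat * (qbz (L:ℤ) (m - j) * qbz (L:ℤ) (m + j)))
          + (∑ᶠ j : ℤ, (eps j * X ^ (Tq j).toNat * X ^ ((m + 1 + j).toNat)) *
            (qbz (L:ℤ) (m - j) * qbz (L:ℤ) (m + 1 + j)))
          + (∑ᶠ j : ℤ, (eps j * X ^ (Tq j).toNat * X ^ (((L:ℤ) + 1 - (m - j)).toNat)) *
            (qbz (L:ℤ) (m - 1 - j) * qbz (L:ℤ) (m + j)))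
          + (∑ᶠ j : ℤ, (eps j * X ^ (Tq j).toNat * X ^ (((L:ℤ) + 1 - (m - j)).toNat) *
            X ^ ((m + 1 + j).toNat)) *
            (qbz (L:ℤ) (m - 1 - j) * qbz (L:ℤ) (m + 1 + j))) :=
          finsum_add4 _ _ _ _
            (hfin_gen L _ m m) (hfin_gen L _ m (m + 1))
            (hfin_gen L _ (m - 1) m) (hfin_gen L _ (m - 1) (m + 1))
      _ = qbz (L:ℤ) m + 0 + 0 + -(X ^ (L + 1)) * qbz (L:ℤ) m := by rw [hK m, E2, E3, E4]
      _ = (1 - X ^ ((L:ℤ) + 1 - m).toNat) * qbz ((L:ℤ) + 1) m := by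
          rw [Mz L m]; ring

lemma hfin_gen2 (M : ℕ) (c d : ℤ → Polynomial ℤ) :
    (Function.support fun m : ℤ => c m * (qbz (M : ℤ) m * d m)).Finite := by
  apply supp_fin 0 (M : ℤ)
  intro m hm
  have h1 : qbz (M : ℤ) m ≠ 0 := by
    intro h; apply hm; simp [h]
  exact qbz_ne_zero_bounds h1

set_option maxHeartbeats 1000000 in
lemma Vz (M N : ℕ) (k : ℤ) :
    qbz ((M : ℤ) + N) k
      = ∑ᶠ m : ℤ, X ^ (((M : ℤ) - m) * (k - m)).toNat * (qbz (M : ℤ) m * qbz (N : ℤ) (k - m)) := by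
  induction N generalizing k with
  | zero =>
    push_cast
    rw [add_zero]
    rw [finsum_eq_single _ k]
    · rw [show ((M : ℤ) - k) * (k - k) = 0 by ring]
      have q00 : qbz (0 : ℤ) 0 = 1 := by simpa using qbz_zero_right 0
      rw [show k - k = 0 by ring, q00]
      simp
    · intro x hx
      rcases lt_or_gt_of_ne hx with h | h
      · rw [show qbz (0:ℤ) (k - x) = 0 from qbz_eq_zero (Or.inr (by omega))]
        ring
      · rw [show qbz (0:ℤ) (k - x) = 0 from qbz_eq_zero (Or.inl (by omega))]
        ring
  | succ N ih =>
    push_cast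
    have dec : ∀ m : ℤ, X ^ (((M : ℤ) - m) * (k - m)).toNat *
        (qbz (M : ℤ) m * qbz ((N : ℤ) + 1) (k - m))
        = X ^ (((M : ℤ) - m) * (k - m)).toNat * (qbz (M : ℤ) m * qbz (N : ℤ) (k - m))
          + (X ^ (((M : ℤ) - m) * (k - m)).toNat * X ^ (((N : ℤ) + 1 - (k - m)).toNat)) *
            (qbz (M : ℤ) m * qbz (N : ℤ) (k - 1 - m)) := by
      intro m
      rw [pascal2z N (k - m), show k - m - 1 = k - 1 - m by ring]
      ring
    have tw : ∀ m : ℤ, (X ^ (((M : ℤ) - m) * (k - m)).toNat * X ^ (((N : ℤ) + 1 - (k - m)).toNat)) *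
        (qbz (M : ℤ) m * qbz (N : ℤ) (k - 1 - m))
        = X ^ (((M : ℤ) + N + 1 - k).toNat) *
          (X ^ (((M : ℤ) - m) * (k - 1 - m)).toNat * (qbz (M : ℤ) m * qbz (N : ℤ) (k - 1 - m))) := by
      intro m
      rcases eq_or_ne (qbz (M:ℤ) m) 0 with h | h
      · simp [h]
      rcases eq_or_ne (qbz (N:ℤ) (k - 1 - m)) 0 with h2 | h2
      · simp [h2]
      have b1 := qbz_ne_zero_bounds h
      have b2 := qbz_ne_zero_bounds h2
      have hq : ((M : ℤ) - m) * (k - m) = ((M : ℤ) - m) * (k - 1 - m) + ((M : ℤ) - m) := by ring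
      have hp : 0 ≤ ((M : ℤ) - m) * (k - 1 - m) :=
        mul_nonneg (by omega) (by omega)
      have e : (((M : ℤ) - m) * (k - m)).toNat + ((N : ℤ) + 1 - (k - m)).toNat
          = ((M : ℤ) + N + 1 - k).toNat + (((M : ℤ) - m) * (k - 1 - m)).toNat := by omega
      calc (X ^ (((M : ℤ) - m) * (k - m)).toNat * X ^ (((N : ℤ) + 1 - (k - m)).toNat)) *
            (qbz (M : ℤ) m * qbz (N : ℤ) (k - 1 - m))
          = X ^ ((((M : ℤ) - m) * (k - m)).toNat + ((N : ℤ) + 1 - (k - m)).toNat) *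
            (qbz (M : ℤ) m * qbz (N : ℤ) (k - 1 - m)) := by ring
        _ = _ := by rw [e]; ring
    have hrw : (M : ℤ) + ((N : ℤ) + 1) = ((M + N : ℕ) : ℤ) + 1 := by push_cast; ring
    rw [hrw, pascal2z (M + N) k]
    have hc : ((M + N : ℕ) : ℤ) = (M : ℤ) + N := by push_cast; ring
    rw [hc, ih k, ih (k - 1)]
    rw [finsum_congr dec,
      finsum_add_distrib
        (hfin_gen2 M _ (fun m => qbz (N : ℤ) (k - m)))
        (hfin_gen2 M _ (fun m => qbz (N : ℤ) (k - 1 - m))),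
      finsum_congr tw,
      ← mul_finsum _ _]

lemma VdC (L : ℕ) (j : ℤ) :
    qbz (2 * (L : ℤ)) ((L : ℤ) - 2 * j)
      = ∑ᶠ n : ℤ, X ^ (((L : ℤ) - n) ^ 2 - j ^ 2).toNat *
          (qbz (L : ℤ) (n - j) * qbz (L : ℤ) (n + j)) := by
  have h0 : (2 * (L : ℤ)) = (L : ℤ) + L := by ring
  rw [h0, Vz L L ((L : ℤ) - 2 * j)]
  have h1 : ∑ᶠ n : ℤ, X ^ (((L : ℤ) - (n + -j)) * ((L : ℤ) - 2 * j - (n + -j))).toNat *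
        (qbz (L : ℤ) (n + -j) * qbz (L : ℤ) ((L : ℤ) - 2 * j - (n + -j)))
      = ∑ᶠ m : ℤ, X ^ (((L : ℤ) - m) * ((L : ℤ) - 2 * j - m)).toNat *
        (qbz (L : ℤ) m * qbz (L : ℤ) ((L : ℤ) - 2 * j - m)) :=
    finsum_reindex_add (-j) (fun m => X ^ (((L : ℤ) - m) * ((L : ℤ) - 2 * j - m)).toNat *
      (qbz (L : ℤ) m * qbz (L : ℤ) ((L : ℤ) - 2 * j - m)))
  rw [← h1]
  apply finsum_congr
  intro n
  rw [show (L : ℤ) - 2 * j - (n + -j) = (L : ℤ) - (n + j) by ring,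
    show ((L : ℤ) - (n + -j)) * ((L : ℤ) - (n + j)) = ((L : ℤ) - n) ^ 2 - j ^ 2 by ring,
    show n + -j = n - j by ring, ← qbz_symm L (n + j)]

set_option maxHeartbeats 1000000 in
theorem stmt5 (L : ℕ) :
    (∑ᶠ j : ℤ, (-1 : Polynomial ℤ) ^ j.natAbs * X ^ (j * (5 * j + 1) / 2).toNat *
        qbz (2 * (L : ℤ)) ((L : ℤ) - 2 * j))
      = ∑ n ∈ Finset.range (L + 1), X ^ (n ^ 2) * qb L n := by
  classical
  set s : Finset ℤ := Finset.Icc (-(L:ℤ) - 1) ((L:ℤ) + 1) with hs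
  set t : Finset ℤ := (Finset.range (L + 1)).map
    ⟨(Nat.cast : ℕ → ℤ), Nat.cast_injective⟩ with ht
  have tmem : ∀ n ∈ t, 0 ≤ n ∧ n ≤ (L:ℤ) := by
    intro n hn
    rw [ht, Finset.mem_map] at hn
    obtain ⟨a, ha, rfl⟩ := hn
    rw [Finset.mem_range] at ha
    simp only [Function.Embedding.coeFn_mk]
    omega
  have step1 : (∑ᶠ j : ℤ, (-1 : Polynomial ℤ) ^ j.natAbs * X ^ (j * (5 * j + 1) / 2).toNat *
        qbz (2 * (L : ℤ)) ((L : ℤ) - 2 * j))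
      = ∑ j ∈ s, (-1 : Polynomial ℤ) ^ j.natAbs * X ^ (j * (5 * j + 1) / 2).toNat *
        qbz (2 * (L : ℤ)) ((L : ℤ) - 2 * j) := by
    apply finsum_eq_sum_of_support_subset
    intro j hj
    rw [Function.mem_support] at hj
    have h1 : qbz (2 * (L:ℤ)) ((L:ℤ) - 2 * j) ≠ 0 := by
      intro h; apply hj; rw [h]; ring
    have hb := qbz_ne_zero_bounds h1
    simp only [hs, Finset.coe_Icc, Set.mem_Icc]
    omega
  have step2 : ∀ j : ℤ, (-1 : Polynomial ℤ) ^ j.natAbs * X ^ (j * (5 * j + 1) / 2).toNat *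
        qbz (2 * (L : ℤ)) ((L : ℤ) - 2 * j)
      = ∑ n ∈ t, (-1 : Polynomial ℤ) ^ j.natAbs * X ^ (j * (5 * j + 1) / 2).toNat *
          (X ^ (((L : ℤ) - n) ^ 2 - j ^ 2).toNat *
            (qbz (L : ℤ) (n - j) * qbz (L : ℤ) (n + j))) := by
    intro j
    rw [VdC L j]
    rw [finsum_eq_sum_of_support_subset (s := t) _ ?_, Finset.mul_sum]
    intro n hn
    rw [Function.mem_support] at hn
    have h1 : qbz (L:ℤ) (n - j) ≠ 0 := by
      intro h; apply hn; rw [h]; ring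
    have h2 : qbz (L:ℤ) (n + j) ≠ 0 := by
      intro h; apply hn; rw [h]; ring
    have b1 := qbz_ne_zero_bounds h1
    have b2 := qbz_ne_zero_bounds h2
    rw [Finset.mem_coe, ht, Finset.mem_map]
    refine ⟨n.toNat, Finset.mem_range.2 (by omega), ?_⟩
    simp only [Function.Embedding.coeFn_mk]
    omega
  have step5 : ∀ n ∈ t, (∑ j ∈ s, (-1 : Polynomial ℤ) ^ j.natAbs *
        X ^ (j * (5 * j + 1) / 2).toNat *
        (X ^ (((L : ℤ) - n) ^ 2 - j ^ 2).toNat *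
          (qbz (L : ℤ) (n - j) * qbz (L : ℤ) (n + j))))
      = X ^ (((L : ℤ) - n) ^ 2).toNat * qbz (L : ℤ) n := by
    intro n hn
    obtain ⟨hn0, hnL⟩ := tmem n hn
    have hsub : (∑ᶠ j : ℤ, (-1 : Polynomial ℤ) ^ j.natAbs *
          X ^ (j * (5 * j + 1) / 2).toNat *
          (X ^ (((L : ℤ) - n) ^ 2 - j ^ 2).toNat *
            (qbz (L : ℤ) (n - j) * qbz (L : ℤ) (n + j))))
        = ∑ j ∈ s, (-1 : Polynomial ℤ) ^ j.natAbs * X ^ (j * (5 * j + 1) / 2).toNat *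
          (X ^ (((L : ℤ) - n) ^ 2 - j ^ 2).toNat *
            (qbz (L : ℤ) (n - j) * qbz (L : ℤ) (n + j))) := by
      apply finsum_eq_sum_of_support_subset
      intro j hj
      rw [Function.mem_support] at hj
      have h1 : qbz (L:ℤ) (n - j) ≠ 0 := by
        intro h; apply hj; rw [h]; ring
      have h2 : qbz (L:ℤ) (n + j) ≠ 0 := by
        intro h; apply hj; rw [h]; ring
      have b1 := qbz_ne_zero_bounds h1
      have b2 := qbz_ne_zero_bounds h2
      simp only [hs, Finset.coe_Icc, Set.mem_Icc]
      omega
    rw [← hsub]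
    have tw : ∀ j : ℤ, (-1 : Polynomial ℤ) ^ j.natAbs * X ^ (j * (5 * j + 1) / 2).toNat *
          (X ^ (((L : ℤ) - n) ^ 2 - j ^ 2).toNat *
            (qbz (L : ℤ) (n - j) * qbz (L : ℤ) (n + j)))
        = X ^ (((L : ℤ) - n) ^ 2).toNat *
          (eps j * X ^ (Tq j).toNat * (qbz (L : ℤ) (n - j) * qbz (L : ℤ) (n + j))) := by
      intro j
      rcases eq_or_ne (qbz (L:ℤ) (n - j)) 0 with h | h
      · simp [h]
      rcases eq_or_ne (qbz (L:ℤ) (n + j)) 0 with h2 | h2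
      · simp [h2]
      have b1 := qbz_ne_zero_bounds h
      have b2 := qbz_ne_zero_bounds h2
      have hmul : 0 ≤ ((L:ℤ) - n - j) * ((L:ℤ) - n + j) :=
        mul_nonneg (by omega) (by omega)
      have hq : ((L:ℤ) - n - j) * ((L:ℤ) - n + j) = ((L:ℤ) - n) ^ 2 - j ^ 2 := by ring
      have hE := Espec j
      have t1 := Tspec j
      have hsq := sqf j
      have e : (j * (5 * j + 1) / 2).toNat + (((L : ℤ) - n) ^ 2 - j ^ 2).toNat
          = (((L : ℤ) - n) ^ 2).toNat + (Tq j).toNat := by omega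
      calc (-1 : Polynomial ℤ) ^ j.natAbs * X ^ (j * (5 * j + 1) / 2).toNat *
            (X ^ (((L : ℤ) - n) ^ 2 - j ^ 2).toNat *
              (qbz (L : ℤ) (n - j) * qbz (L : ℤ) (n + j)))
          = eps j * X ^ ((j * (5 * j + 1) / 2).toNat + (((L : ℤ) - n) ^ 2 - j ^ 2).toNat) *
            (qbz (L : ℤ) (n - j) * qbz (L : ℤ) (n + j)) := by rw [eps]; ring
        _ = X ^ (((L : ℤ) - n) ^ 2).toNat *
            (eps j * X ^ (Tq j).toNat * (qbz (L : ℤ) (n - j) * qbz (L : ℤ) (n + j))) := by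
            rw [e]; ring
    rw [finsum_congr tw,
      ← mul_finsum _ _,
      (KK L).1 n]
  calc (∑ᶠ j : ℤ, (-1 : Polynomial ℤ) ^ j.natAbs * X ^ (j * (5 * j + 1) / 2).toNat *
        qbz (2 * (L : ℤ)) ((L : ℤ) - 2 * j))
      = ∑ j ∈ s, (-1 : Polynomial ℤ) ^ j.natAbs * X ^ (j * (5 * j + 1) / 2).toNat *
        qbz (2 * (L : ℤ)) ((L : ℤ) - 2 * j) := step1
    _ = ∑ j ∈ s, ∑ n ∈ t, (-1 : Polynomial ℤ) ^ j.natAbs * X ^ (j * (5 * j + 1) / 2).toNat *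
        (X ^ (((L : ℤ) - n) ^ 2 - j ^ 2).toNat *
          (qbz (L : ℤ) (n - j) * qbz (L : ℤ) (n + j))) :=
        Finset.sum_congr rfl fun j _ => step2 j
    _ = ∑ n ∈ t, ∑ j ∈ s, (-1 : Polynomial ℤ) ^ j.natAbs * X ^ (j * (5 * j + 1) / 2).toNat *
        (X ^ (((L : ℤ) - n) ^ 2 - j ^ 2).toNat *
          (qbz (L : ℤ) (n - j) * qbz (L : ℤ) (n + j))) := Finset.sum_comm
    _ = ∑ n ∈ t, X ^ (((L : ℤ) - n) ^ 2).toNat * qbz (L : ℤ) n :=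
        Finset.sum_congr rfl step5
    _ = ∑ a ∈ Finset.range (L + 1), X ^ (((L : ℤ) - (a : ℤ)) ^ 2).toNat * qbz (L : ℤ) (a : ℤ) := by
        rw [ht, Finset.sum_map]
        simp only [Function.Embedding.coeFn_mk]
    _ = ∑ a ∈ Finset.range (L + 1), X ^ ((L - a) ^ 2) * qb L a := by
        apply Finset.sum_congr rfl
        intro a ha
        rw [Finset.mem_range] at ha
        have h1 : ((L : ℤ) - (a : ℤ)) = (((L - a : ℕ) : ℤ)) :=
          (Nat.cast_sub (by omega : a ≤ L)).symm
        have h2 : ((((L - a : ℕ) : ℤ)) ^ 2) = (((L - a) ^ 2 : ℕ) : ℤ) := by push_cast; ring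
        rw [h1, h2, Int.toNat_natCast, qbz_eq_qb]
    _ = ∑ n ∈ Finset.range (L + 1), X ^ (n ^ 2) * qb L n := by
        have refl := Finset.sum_range_reflect
          (fun a => X ^ ((L - a) ^ 2) * qb L a : ℕ → Polynomial ℤ) (L + 1)
        simp only [Nat.add_sub_cancel] at refl
        rw [← refl]
        apply Finset.sum_congr rfl
        intro a ha
        rw [Finset.mem_range] at ha
        rw [Nat.sub_sub_self (by omega : a ≤ L), ← qb_symm L a (by omega)]
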